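/- Let n ∈ ℕ and let q : ℕ → ℍ, with derived polynomials f₁, f₂. Then for every complex number z, the quaternion z.re + z.im·i is a zero of p(x) = ∑_{m=0}^{n} (q m)·x^m if and only if f₁(z) = 0 and f₂(conj z) = 0. -/

import Mathlib

noncomputable section

/-- The quaternion `a + b·i` corresponding to the complex number `z = a + b·I`. -/
def cq (z : ℂ) : Quaternion ℝ := ⟨z.re, z.im, 0, 0⟩

/-- The quaternion imaginary unit `k`. -/
def qk : Quaternion ℝ := ⟨0, 0, 0, 1⟩

/-- Evaluation of the first derived polynomial `f₁(t) = ∑ t₁⁽ᵐ⁾ tᵐ`,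
where `q m = t₁⁽ᵐ⁾ + t₂⁽ᵐ⁾·j` and `t₁⁽ᵐ⁾ = (q m).re + (q m).imI·I`. -/
def f1 (n : ℕ) (q : ℕ → Quaternion ℝ) (z : ℂ) : ℂ :=
  ∑ m ∈ Finset.range (n + 1), (⟨(q m).re, (q m).imI⟩ : ℂ) * z ^ m

/-- Evaluation of the second derived polynomial `f₂(t) = ∑ t₂⁽ᵐ⁾ tᵐ`,
where `t₂⁽ᵐ⁾ = (q m).imJ + (q m).imK·I`. -/
def f2 (n : ℕ) (q : ℕ → Quaternion ℝ) (z : ℂ) : ℂ :=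
  ∑ m ∈ Finset.range (n + 1), (⟨(q m).imJ, (q m).imK⟩ : ℂ) * z ^ m

/-- Evaluation of `f̄₁`, obtained from `f₁` by conjugating each coefficient. -/
def f1b (n : ℕ) (q : ℕ → Quaternion ℝ) (z : ℂ) : ℂ :=
  ∑ m ∈ Finset.range (n + 1), (starRingEnd ℂ) (⟨(q m).re, (q m).imI⟩ : ℂ) * z ^ m

/-- Evaluation of `f̄₂`, obtained from `f₂` by conjugating each coefficient. -/
def f2b (n : ℕ) (q : ℕ → Quaternion ℝ) (z : ℂ) : ℂ :=
  ∑ m ∈ Finset.range (n + 1), (starRingEnd ℂ) (⟨(q m).imJ, (q m).imK⟩ : ℂ) * z ^ m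

/-- Evaluation of the discriminant polynomial `p̃ = f₁·f̄₁ + f₂·f̄₂`. -/
def ptilde (n : ℕ) (q : ℕ → Quaternion ℝ) (z : ℂ) : ℂ :=
  f1 n q z * f1b n q z + f2 n q z * f2b n q z

/-!
Write a quaternion as `a = t₁ + t₂·j` with `t₁, t₂ ∈ ℂ`. Since `j·w = conj w·j` for `w ∈ ℂ`, each term
`a·wᵐ` equals `t₁wᵐ + t₂(conj w)ᵐ·j`, so `p(w) = f₁(w) + f₂(conj w)·j`; as `ℍ = ℂ ⊕ ℂ·j`, this
vanishes exactly when both complex components do.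
-/

open Quaternion ComplexConjugate

def qj : ℍ := ⟨0, 0, 1, 0⟩

@[simp] theorem re_qj : qj.re = 0 := rfl
@[simp] theorem imI_qj : qj.imI = 0 := rfl
@[simp] theorem imJ_qj : qj.imJ = 1 := rfl
@[simp] theorem imK_qj : qj.imK = 0 := rfl

theorem coeComplex_pow (w : ℂ) (m : ℕ) : ((w ^ m : ℂ) : ℍ) = (w : ℍ) ^ m :=
  map_pow ofComplex w m

theorem coeComplex_sum {ι : Type*} (s : Finset ι) (f : ι → ℂ) :
    ((∑ i ∈ s, f i : ℂ) : ℍ) = ∑ i ∈ s, (f i : ℍ) :=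
  map_sum ofComplex f s

theorem mul_coeComplex (a : ℍ) (w : ℂ) :
    a * (w : ℍ) = ((⟨a.re, a.imI⟩ * w : ℂ) : ℍ) + ((⟨a.imJ, a.imK⟩ * conj w : ℂ) : ℍ) * qj := by
  ext <;> simp [Quaternion.re_mul, Quaternion.imI_mul, Quaternion.imJ_mul, Quaternion.imK_mul]

theorem coeComplex_add_coeComplex_mul_qj_eq_zero_iff (u v : ℂ) :
    (u : ℍ) + (v : ℍ) * qj = 0 ↔ u = 0 ∧ v = 0 := by
  simp [Quaternion.ext_iff, Complex.ext_iff, Quaternion.re_mul, Quaternion.imI_mul,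
    Quaternion.imJ_mul, Quaternion.imK_mul]
  tauto

theorem sum_mul_coeComplex_pow (s : Finset ℕ) (q : ℕ → ℍ) (w : ℂ) :
    ∑ m ∈ s, q m * (w : ℍ) ^ m =
      ((∑ m ∈ s, (⟨(q m).re, (q m).imI⟩ : ℂ) * w ^ m : ℂ) : ℍ) +
        ((∑ m ∈ s, (⟨(q m).imJ, (q m).imK⟩ : ℂ) * conj w ^ m : ℂ) : ℍ) * qj := by
  simp only [← coeComplex_pow, mul_coeComplex, map_pow, Finset.sum_add_distrib, Finset.sum_mul,
    coeComplex_sum]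

/-- For a complex number `z`, the corresponding quaternion `z.re + z.im·i` is a zero of
the simple quaternionic polynomial `p` iff `f₁(z) = 0` and `f₂(conj z) = 0`. -/
theorem complex_quaternion_zero_iff
    (n : ℕ) (q : ℕ → Quaternion ℝ) (z : ℂ) :
    ∑ m ∈ Finset.range (n + 1), q m * (cq z) ^ m = 0 ↔
      f1 n q z = 0 ∧ f2 n q ((starRingEnd ℂ) z) = 0 := by
  rw [show cq z = (z : ℍ) from rfl, sum_mul_coeComplex_pow,
    coeComplex_add_coeComplex_mul_qj_eq_zero_iff]
  rfl
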